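/- arXiv:1806.09480 — 7 statements merged into one kernel-verified Lean document; each statement's English description precedes it below -/
import Mathlib

section
/- Let k be a positive integer, x a real number with |kx| < 1, and s a complex number with Re(s) > 1. Then ζ(s) · Σ_{n=1}^∞ (n·L_k(x:n))/n^s = Σ_{n=1}^∞ (kx)^n/n^s, where ζ denotes the Riemann zeta function. (Both series on the left and right converge absolutely under the stated hypotheses.) -/
open scoped BigOperators

/-- `L_k(x : n) = (1/n) * ∑_{d ∣ n} μ(n/d) k^d x^d`. -/
noncomputable def Lk (k : ℕ) (x : ℝ) (n : ℕ) : ℝ :=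
  (1 / (n : ℝ)) *
    ∑ d ∈ n.divisors, ((ArithmeticFunction.moebius (n / d) : ℤ) : ℝ) * (k : ℝ) ^ d * x ^ d

/-!
`n · L_k(x:n)` is the Möbius transform `Σ_{d ∣ n} μ(n/d) c^d` of `n ↦ c^n`, where `c = kx`, so
multiplying its Dirichlet series by `ζ(s) = Σ n^{-s}` undoes the transform (Möbius inversion) and
gives `Σ c^n n^{-s}`. For `Re s > 1` all series converge absolutely because both coefficient
sequences are bounded: `|Σ_{d ∣ n} μ(n/d) c^d| ≤ Σ_d |c|^d = 1 / (1 - |c|)`.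
-/

open ArithmeticFunction LSeries.notation
open scoped ArithmeticFunction.Moebius

lemma sum_divisors_sum_moebius_mul {R : Type*} [CommRing R] (f : ℕ → R) {n : ℕ} (hn : 0 < n) :
    ∑ d ∈ n.divisors, ∑ e ∈ d.divisors, ((μ (d / e) : ℤ) : R) * f e = f n := by
  revert n
  rw [sum_eq_iff_sum_smul_moebius_eq]
  intro n _
  simp only [zsmul_eq_mul]
  exact Nat.sum_divisorsAntidiagonal' (fun a b => ((μ a : ℤ) : R) * f b)

lemma norm_sum_moebius_mul_pow_le {c : ℂ} (hc : ‖c‖ < 1) (n : ℕ) :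
    ‖∑ d ∈ n.divisors, ((μ (n / d) : ℤ) : ℂ) * c ^ d‖ ≤ (1 - ‖c‖)⁻¹ :=
  calc ‖∑ d ∈ n.divisors, ((μ (n / d) : ℤ) : ℂ) * c ^ d‖
      ≤ ∑ d ∈ n.divisors, ‖c‖ ^ d := by
        refine norm_sum_le_of_le _ fun d _ => ?_
        rw [norm_mul, norm_pow, Complex.norm_intCast]
        exact mul_le_of_le_one_left (by positivity) (mod_cast abs_moebius_le_one)
    _ ≤ ∑' d, ‖c‖ ^ d :=
        (summable_geometric_of_lt_one (norm_nonneg c) hc).sum_le_tsum _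
          fun d _ => by positivity
    _ = (1 - ‖c‖)⁻¹ := tsum_geometric_of_lt_one (norm_nonneg c) hc

lemma LSeriesSummable_sum_moebius_mul_pow {c : ℂ} (hc : ‖c‖ < 1) {s : ℂ} (hs : 1 < s.re) :
    LSeriesSummable (fun n => ∑ d ∈ n.divisors, ((μ (n / d) : ℤ) : ℂ) * c ^ d) s :=
  LSeriesSummable_of_bounded_of_one_lt_re (fun n _ => norm_sum_moebius_mul_pow_le hc n) hs

lemma LSeriesSummable_pow {c : ℂ} (hc : ‖c‖ ≤ 1) {s : ℂ} (hs : 1 < s.re) :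
    LSeriesSummable (fun n => c ^ n) s :=
  LSeriesSummable_of_bounded_of_one_lt_re (m := 1)
    (fun n _ => by rw [norm_pow]; exact pow_le_one₀ (norm_nonneg c) hc) hs

lemma riemannZeta_mul_LSeries_sum_moebius_mul {f : ℕ → ℂ} {s : ℂ} (hs : 1 < s.re)
    (hf : LSeriesSummable (fun n => ∑ d ∈ n.divisors, ((μ (n / d) : ℤ) : ℂ) * f d) s) :
    riemannZeta s * L (fun n => ∑ d ∈ n.divisors, ((μ (n / d) : ℤ) : ℂ) * f d) s = L f s := by
  rw [← LSeries_one_eq_riemannZeta hs,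
    ← LSeries_convolution' (LSeriesSummable_one_iff.mpr hs) hf]
  refine LSeries_congr (fun {n} hn => ?_) s
  rw [LSeries.convolution_def]
  simp only [Pi.one_apply, one_mul]
  rw [Nat.sum_divisorsAntidiagonal' (fun _ b => ∑ d ∈ b.divisors, ((μ (b / d) : ℤ) : ℂ) * f d)]
  exact sum_divisors_sum_moebius_mul f (Nat.pos_of_ne_zero hn)

lemma LSeriesSummable.summable_norm_nat_succ {f : ℕ → ℂ} {s : ℂ} (hf : LSeriesSummable f s) :
    Summable fun n : ℕ => ‖f (n + 1) / ((n + 1 : ℕ) : ℂ) ^ s‖ := by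
  simpa [Function.comp_def, LSeries.term_of_ne_zero]
    using hf.norm.comp_injective Nat.succ_injective

lemma LSeries_eq_tsum_nat_succ (f : ℕ → ℂ) (s : ℂ) :
    L f s = ∑' n : ℕ, f (n + 1) / ((n + 1 : ℕ) : ℂ) ^ s := by
  rw [LSeries, ← Nat.succ_injective.tsum_eq]
  · simp [LSeries.term_of_ne_zero]
  · rintro (_ | n) h
    · exact absurd (LSeries.term_zero f s) h
    · exact ⟨n, rfl⟩

lemma natCast_mul_Lk (k : ℕ) (x : ℝ) (n : ℕ) :
    (n : ℂ) * (Lk k x n : ℂ) =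
      ∑ d ∈ n.divisors, ((μ (n / d) : ℤ) : ℂ) * (((k : ℝ) * x : ℝ) : ℂ) ^ d := by
  rcases Nat.eq_zero_or_pos n with rfl | hn
  · simp
  · have : (n : ℂ) ≠ 0 := Nat.cast_ne_zero.mpr hn.ne'
    simp only [Lk]
    push_cast
    rw [← mul_assoc, mul_one_div_cancel this, one_mul]
    simp only [mul_pow, mul_assoc]

theorem stmt0_general (k : ℕ) (x : ℝ) (hx : |(k : ℝ) * x| < 1)
    (s : ℂ) (hs : 1 < s.re) :
    Summable (fun n : ℕ =>
      ‖(((n + 1 : ℕ) : ℂ) * ((Lk k x (n + 1) : ℝ) : ℂ)) / ((n + 1 : ℕ) : ℂ) ^ s‖) ∧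
    Summable (fun n : ℕ =>
      ‖((((k : ℝ) * x : ℝ) : ℂ) ^ (n + 1)) / ((n + 1 : ℕ) : ℂ) ^ s‖) ∧
    riemannZeta s *
        ∑' n : ℕ, (((n + 1 : ℕ) : ℂ) * ((Lk k x (n + 1) : ℝ) : ℂ)) / ((n + 1 : ℕ) : ℂ) ^ s
      = ∑' n : ℕ, ((((k : ℝ) * x : ℝ) : ℂ) ^ (n + 1)) / ((n + 1 : ℕ) : ℂ) ^ s := by
  have hc : ‖(((k : ℝ) * x : ℝ) : ℂ)‖ < 1 := by rwa [Complex.norm_real, Real.norm_eq_abs]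
  have hLk : (fun n : ℕ => (n : ℂ) * (Lk k x n : ℂ)) =
      fun n => ∑ d ∈ n.divisors, ((μ (n / d) : ℤ) : ℂ) * (((k : ℝ) * x : ℝ) : ℂ) ^ d :=
    funext (natCast_mul_Lk k x)
  have hsum : LSeriesSummable (fun n : ℕ => (n : ℂ) * (Lk k x n : ℂ)) s :=
    hLk ▸ LSeriesSummable_sum_moebius_mul_pow hc hs
  refine ⟨hsum.summable_norm_nat_succ, (LSeriesSummable_pow hc.le hs).summable_norm_nat_succ, ?_⟩
  rw [← LSeries_eq_tsum_nat_succ (fun n => (n : ℂ) * (Lk k x n : ℂ)),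
    ← LSeries_eq_tsum_nat_succ (fun n => (((k : ℝ) * x : ℝ) : ℂ) ^ n), hLk]
  exact riemannZeta_mul_LSeries_sum_moebius_mul hs (LSeriesSummable_sum_moebius_mul_pow hc hs)

theorem stmt0 (k : ℕ) (hk : 0 < k) (x : ℝ) (hx : |(k : ℝ) * x| < 1)
    (s : ℂ) (hs : 1 < s.re) :
    Summable (fun n : ℕ =>
      ‖(((n + 1 : ℕ) : ℂ) * ((Lk k x (n + 1) : ℝ) : ℂ)) / ((n + 1 : ℕ) : ℂ) ^ s‖) ∧
    Summable (fun n : ℕ =>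
      ‖((((k : ℝ) * x : ℝ) : ℂ) ^ (n + 1)) / ((n + 1 : ℕ) : ℂ) ^ s‖) ∧
    riemannZeta s *
        ∑' n : ℕ, (((n + 1 : ℕ) : ℂ) * ((Lk k x (n + 1) : ℝ) : ℂ)) / ((n + 1 : ℕ) : ℂ) ^ s
      = ∑' n : ℕ, ((((k : ℝ) * x : ℝ) : ℂ) ^ (n + 1)) / ((n + 1 : ℕ) : ℂ) ^ s :=
  stmt0_general k x hx s hs
end

section
/- Let m be a positive integer and s a complex number with Re(s) > 1. Then Σ_{n=1}^∞ μ(mn)/n^s = (μ(m)/ζ(s)) · ∏_{p | m, p prime} 1/(1 − p^{−s}), where the product runs over the distinct prime divisors of m, μ is the Möbius function, and ζ is the Riemann zeta function. -/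
/-!
Since `μ (m * n) = μ m * μ n` when `m` and `n` are coprime and `μ (m * n) = 0` otherwise, the
series equals `μ m` times the Dirichlet series of `μ` restricted to integers coprime to `m`.
Its summand is multiplicative, so it has the Euler product `∏_{p ∤ m} (1 - p ^ (-s))`;
multiplying by the Euler product `ζ s = ∏_p (1 - p ^ (-s))⁻¹` leaves the finite product
`∏_{p ∣ m} (1 - p ^ (-s))⁻¹`.
-/

open ArithmeticFunction Complex
open scoped ArithmeticFunction.Moebius

theorem ArithmeticFunction.moebius_mul_eq_ite (m n : ℕ) :
    μ (m * n) = if m.Coprime n then μ m * μ n else 0 := by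
  split_ifs with h
  · exact isMultiplicative_moebius.map_mul_of_coprime h
  · obtain ⟨p, hp, hpm, hpn⟩ := Nat.Prime.not_coprime_iff_dvd.mp h
    exact moebius_eq_zero_of_not_squarefree fun hsq =>
      hp.ne_one (Nat.isUnit_iff.mp (hsq p (mul_dvd_mul hpm hpn)))

noncomputable def coprimeMoebiusSummand (m : ℕ) (s : ℂ) (n : ℕ) : ℂ :=
  if m.Coprime n then μ n * (n : ℂ) ^ (-s) else 0

namespace coprimeMoebiusSummand

variable {m : ℕ} {s : ℂ}

theorem apply_zero : coprimeMoebiusSummand m s 0 = 0 := by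
  simp [coprimeMoebiusSummand]

theorem apply_one : coprimeMoebiusSummand m s 1 = 1 := by
  simp [coprimeMoebiusSummand]

theorem apply_mul {a b : ℕ} (hab : a.Coprime b) :
    coprimeMoebiusSummand m s (a * b) =
      coprimeMoebiusSummand m s a * coprimeMoebiusSummand m s b := by
  simp only [coprimeMoebiusSummand, Nat.coprime_mul_iff_right, ite_and,
    isMultiplicative_moebius.map_mul_of_coprime hab]
  split_ifs <;> push_cast [natCast_mul_natCast_cpow] <;> ring

theorem norm_le (n : ℕ) : ‖coprimeMoebiusSummand m s n‖ ≤ ‖1 / (n : ℂ) ^ s‖ := by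
  have hμ : ‖(μ n : ℂ)‖ ≤ 1 := by
    rw [Complex.norm_intCast]
    exact_mod_cast abs_moebius_le_one
  unfold coprimeMoebiusSummand
  split_ifs
  · rw [norm_mul, cpow_neg, one_div]
    exact mul_le_of_le_one_left (norm_nonneg _) hμ
  · simp

theorem summable_norm (hs : 1 < s.re) : Summable (‖coprimeMoebiusSummand m s ·‖) :=
  (summable_norm_iff.mpr (summable_one_div_nat_cpow.mpr hs)).of_nonneg_of_le
    (fun _ => norm_nonneg _) norm_le

theorem tsum_prime_pow {p : ℕ} (hp : p.Prime) :
    ∑' e, coprimeMoebiusSummand m s (p ^ e) = if p ∣ m then 1 else 1 - (p : ℂ) ^ (-s) := by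
  have hvanish : ∀ e ∉ Finset.range 2, coprimeMoebiusSummand m s (p ^ e) = 0 := by
    intro e he
    rw [Finset.mem_range, not_lt] at he
    have he1 : e ≠ 1 := by omega
    simp [coprimeMoebiusSummand, moebius_apply_prime_pow hp (show e ≠ 0 by omega), he1]
  have hcop : m.Coprime p ↔ ¬ p ∣ m := Nat.coprime_comm.trans hp.coprime_iff_not_dvd
  rw [tsum_eq_sum hvanish]
  by_cases hpm : p ∣ m <;>
    simp [Finset.sum_range_succ, coprimeMoebiusSummand, hcop, hpm, moebius_apply_prime hp,
      sub_eq_add_neg]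

theorem hasProd_eulerProduct (hs : 1 < s.re) :
    HasProd (fun p : Nat.Primes ↦ if (p : ℕ) ∣ m then 1 else 1 - (p : ℂ) ^ (-s))
      (∑' n, coprimeMoebiusSummand m s n) := by
  convert EulerProduct.eulerProduct_hasProd apply_one apply_mul (summable_norm hs) apply_zero
    using 2 with p
  exact (tsum_prime_pow p.2).symm

theorem tsum_eq (hm : m ≠ 0) (hs : 1 < s.re) :
    ∑' n, coprimeMoebiusSummand m s n
      = (riemannZeta s)⁻¹ * ∏ p ∈ m.primeFactors, (1 - (p : ℂ) ^ (-s))⁻¹ := by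
  have hfactor (p : Nat.Primes) :
      ((1 - (p : ℂ) ^ (-s))⁻¹ * if (p : ℕ) ∣ m then 1 else 1 - (p : ℂ) ^ (-s))
        = if (p : ℕ) ∣ m then (1 - (p : ℂ) ^ (-s))⁻¹ else 1 := by
    split_ifs
    · exact mul_one _
    · exact inv_mul_cancel₀ (one_sub_prime_cpow_ne_zero p.2 hs)
  have hprod := (riemannZeta_eulerProduct_hasProd hs).mul (hasProd_eulerProduct (m := m) hs)
  simp only [hfactor] at hprod
  have hfinite : HasProd (fun p : Nat.Primes ↦ if (p : ℕ) ∣ m then (1 - (p : ℂ) ^ (-s))⁻¹ else 1)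
      (∏ p ∈ m.primeFactors, (1 - (p : ℂ) ^ (-s))⁻¹) := by
    rw [← Finset.prod_subtype_of_mem _ fun p hp => Nat.prime_of_mem_primeFactors hp,
      Finset.prod_congr rfl fun p hp => (if_pos (Nat.dvd_of_mem_primeFactors
        (Finset.mem_subtype.mp hp))).symm]
    exact hasProd_prod_of_ne_finset_one fun p hp => if_neg fun hpm =>
      hp (Finset.mem_subtype.mpr (Nat.mem_primeFactors.mpr ⟨p.2, hpm, hm⟩))
  rw [eq_inv_mul_iff_mul_eq₀ (riemannZeta_ne_zero_of_one_lt_re hs)]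
  exact hprod.unique hfinite

theorem tsum_succ : ∑' n, coprimeMoebiusSummand m s (n + 1) = ∑' n, coprimeMoebiusSummand m s n :=
  Nat.succ_injective.tsum_eq fun n hn =>
    (Nat.exists_eq_add_one_of_ne_zero fun h : n = 0 => hn (h ▸ apply_zero)).imp fun _ hk => hk.symm

end coprimeMoebiusSummand

theorem stmt1 (m : ℕ) (hm : 0 < m) (s : ℂ) (hs : 1 < s.re) :
    ∑' n : ℕ, ((ArithmeticFunction.moebius (m * (n + 1)) : ℤ) : ℂ) / ((n + 1 : ℕ) : ℂ) ^ s
      = (((ArithmeticFunction.moebius m : ℤ) : ℂ) / riemannZeta s) *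
          ∏ p ∈ m.primeFactors, 1 / (1 - (p : ℂ) ^ (-s)) := by
  have hterm (n : ℕ) :
      ((μ (m * n) : ℤ) : ℂ) / (n : ℂ) ^ s = μ m * coprimeMoebiusSummand m s n := by
    rw [moebius_mul_eq_ite, coprimeMoebiusSummand, cpow_neg, div_eq_mul_inv]
    split_ifs <;> push_cast <;> ring
  simp only [hterm, tsum_mul_left, coprimeMoebiusSummand.tsum_succ,
    coprimeMoebiusSummand.tsum_eq hm.ne' hs, one_div]
  ring
end

section
/- Let k be a positive integer, x a real number with |kx| < 1, and s a complex number with Re(s) > 1. Then Σ_{n=1}^∞ L_k(x:2n−1)/(2n−1)^{s−1} = (Σ_{n odd, n ≥ 1} μ(n)/n^s) · (Σ_{m odd, m ≥ 1} (kx)^m/m^s), where both factors on the right converge absolutely. -/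
/-!
`n L_k(x:n)` is the Dirichlet convolution `(μ ⍟ (kx)^·)(n)`, so the left-hand side is the L-series
of the restriction of this convolution to odd `n`. Since a product is odd exactly when both
factors are, restricting to odd indices commutes with Dirichlet convolution, and the L-series of
the convolution of the two odd parts factors as the product of their L-series.
-/

open scoped BigOperators

open scoped LSeries.notation
open LSeries

lemma LSeries.term_indicator (S : Set ℕ) (f : ℕ → ℂ) (s : ℂ) :
    term (S.indicator f) s = S.indicator (term f s) := by
  ext n
  by_cases hS : n ∈ S <;> simp [term_def, hS]

lemma LSeries.convolution_indicator {R : Type*} [Semiring R] {S : Set ℕ}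
    (hS : ∀ a b, a * b ∈ S ↔ a ∈ S ∧ b ∈ S) (f g : ℕ → R) :
    S.indicator f ⍟ S.indicator g = S.indicator (f ⍟ g) := by
  ext n
  simp only [convolution_def]
  by_cases hn : n ∈ S
  · rw [Set.indicator_of_mem hn]
    refine Finset.sum_congr rfl fun p hp => ?_
    obtain ⟨h₁, h₂⟩ := (hS _ _).mp ((Nat.mem_divisorsAntidiagonal.mp hp).1 ▸ hn)
    rw [Set.indicator_of_mem h₁, Set.indicator_of_mem h₂]
  · rw [Set.indicator_of_notMem hn]
    refine Finset.sum_eq_zero fun p hp => ?_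
    rw [← (Nat.mem_divisorsAntidiagonal.mp hp).1, hS, not_and_or] at hn
    rcases hn with h | h
    · rw [Set.indicator_of_notMem h, zero_mul]
    · rw [Set.indicator_of_notMem h, mul_zero]

lemma LSeries.convolution_indicator_odd {R : Type*} [Semiring R] (f g : ℕ → R) :
    {n | Odd n}.indicator f ⍟ {n | Odd n}.indicator g = {n | Odd n}.indicator (f ⍟ g) :=
  convolution_indicator (fun _ _ => Nat.odd_mul) f g

lemma Nat.injective_two_mul_add_one : Function.Injective (fun n : ℕ => 2 * n + 1) :=
  fun _ _ h => by simpa using h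

lemma LSeries_indicator_odd (f : ℕ → ℂ) (s : ℂ) :
    LSeries ({n | Odd n}.indicator f) s = ∑' n : ℕ, f (2 * n + 1) / ((2 * n + 1 : ℕ) : ℂ) ^ s := by
  have hsupport : Function.support ({n | Odd n}.indicator (term f s)) ⊆
      Set.range (fun n : ℕ => 2 * n + 1) :=
    fun _ hm => let ⟨n, hn⟩ := Set.support_indicator_subset hm; ⟨n, hn.symm⟩
  rw [LSeries, term_indicator, ← Nat.injective_two_mul_add_one.tsum_eq hsupport]
  refine tsum_congr fun n => ?_
  rw [Set.indicator_of_mem (s := {n | Odd n}) (odd_two_mul_add_one n),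
    term_of_ne_zero (by omega)]

lemma LSeriesSummable.indicator {f : ℕ → ℂ} {s : ℂ} (hf : LSeriesSummable f s) (S : Set ℕ) :
    LSeriesSummable (S.indicator f) s := by
  rw [LSeriesSummable, term_indicator]
  exact Summable.indicator hf S

lemma LSeriesSummable.summable_norm_odd {f : ℕ → ℂ} {s : ℂ} (hf : LSeriesSummable f s) :
    Summable fun n : ℕ => ‖f (2 * n + 1) / ((2 * n + 1 : ℕ) : ℂ) ^ s‖ := by
  refine (hf.norm.comp_injective Nat.injective_two_mul_add_one).congr fun n => ?_
  simp only [Function.comp_apply, term_of_ne_zero (show 2 * n + 1 ≠ 0 by omega)]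

lemma LSeriesSummable_pow_of_abs_lt_one {y : ℝ} (hy : |y| < 1) {s : ℂ} (hs : 1 < s.re) :
    LSeriesSummable (fun n => (y : ℂ) ^ n) s :=
  LSeriesSummable_of_bounded_of_one_lt_re (m := 1) (fun n _ => by
    rw [norm_pow, Complex.norm_real, Real.norm_eq_abs]
    exact pow_le_one₀ (abs_nonneg y) hy.le) hs

lemma Lk_eq_moebius_convolution_div (k : ℕ) (x : ℝ) (n : ℕ) :
    (Lk k x n : ℂ) = (↗ArithmeticFunction.moebius ⍟ fun m => ((k * x : ℝ) : ℂ) ^ m) n / n := by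
  rw [Lk, convolution_def]
  dsimp only
  rw [Nat.sum_divisorsAntidiagonal'
    (fun a b => ((ArithmeticFunction.moebius a : ℤ) : ℂ) * ((k * x : ℝ) : ℂ) ^ b)]
  push_cast
  simp only [mul_pow, mul_assoc]
  ring

lemma Complex.div_div_cpow_sub_one {z : ℂ} (hz : z ≠ 0) (c s : ℂ) :
    c / z / z ^ (s - 1) = c / z ^ s := by
  rw [Complex.cpow_sub _ _ hz, Complex.cpow_one]
  field_simp

theorem stmt4_general (k : ℕ) (x : ℝ) (hx : |(k : ℝ) * x| < 1)
    (s : ℂ) (hs : 1 < s.re) :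
    Summable (fun n : ℕ =>
      ‖((ArithmeticFunction.moebius (2 * n + 1) : ℤ) : ℂ) / ((2 * n + 1 : ℕ) : ℂ) ^ s‖) ∧
    Summable (fun m : ℕ =>
      ‖((((k : ℝ) * x : ℝ) : ℂ)) ^ (2 * m + 1) / ((2 * m + 1 : ℕ) : ℂ) ^ s‖) ∧
    ∑' n : ℕ, ((Lk k x (2 * n + 1) : ℝ) : ℂ) / ((2 * n + 1 : ℕ) : ℂ) ^ (s - 1)
      = (∑' n : ℕ, ((ArithmeticFunction.moebius (2 * n + 1) : ℤ) : ℂ) / ((2 * n + 1 : ℕ) : ℂ) ^ s) *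
        (∑' m : ℕ, ((((k : ℝ) * x : ℝ) : ℂ)) ^ (2 * m + 1) / ((2 * m + 1 : ℕ) : ℂ) ^ s) := by
  have hμ : LSeriesSummable ↗ArithmeticFunction.moebius s :=
    ArithmeticFunction.LSeriesSummable_moebius_iff.mpr hs
  have hpow := LSeriesSummable_pow_of_abs_lt_one hx hs
  refine ⟨hμ.summable_norm_odd, hpow.summable_norm_odd, ?_⟩
  rw [← LSeries_indicator_odd ↗ArithmeticFunction.moebius, ← LSeries_indicator_odd,
    ← LSeries_convolution' (hμ.indicator _) (hpow.indicator _), convolution_indicator_odd,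
    LSeries_indicator_odd]
  refine tsum_congr fun n => ?_
  rw [Lk_eq_moebius_convolution_div,
    Complex.div_div_cpow_sub_one (by exact_mod_cast (show 2 * n + 1 ≠ 0 by omega))]

theorem stmt4 (k : ℕ) (hk : 0 < k) (x : ℝ) (hx : |(k : ℝ) * x| < 1)
    (s : ℂ) (hs : 1 < s.re) :
    Summable (fun n : ℕ =>
      ‖((ArithmeticFunction.moebius (2 * n + 1) : ℤ) : ℂ) / ((2 * n + 1 : ℕ) : ℂ) ^ s‖) ∧
    Summable (fun m : ℕ =>
      ‖((((k : ℝ) * x : ℝ) : ℂ)) ^ (2 * m + 1) / ((2 * m + 1 : ℕ) : ℂ) ^ s‖) ∧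
    ∑' n : ℕ, ((Lk k x (2 * n + 1) : ℝ) : ℂ) / ((2 * n + 1 : ℕ) : ℂ) ^ (s - 1)
      = (∑' n : ℕ, ((ArithmeticFunction.moebius (2 * n + 1) : ℤ) : ℂ) / ((2 * n + 1 : ℕ) : ℂ) ^ s) *
        (∑' m : ℕ, ((((k : ℝ) * x : ℝ) : ℂ)) ^ (2 * m + 1) / ((2 * m + 1 : ℕ) : ℂ) ^ s) :=
  stmt4_general k x hx s hs
end

section
/- Let k be a positive integer, x a real number with |kx| < 1, and s a complex number with Re(s) > 1. Then ζ(s) · Σ_{n=1}^∞ L_k(x:2n−1)/(2n−1)^{s−1} = (2^s · Li_s(kx) − Li_s(k²x²))/(2^s − 1), where ζ is the Riemann zeta function and Li_s(z) := Σ_{n=1}^∞ z^n/n^s. -/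
open scoped BigOperators

/-- The polylogarithm `Li_s(z) = ∑_{n ≥ 1} z^n / n^s`. -/
noncomputable def Li (s z : ℂ) : ℂ := ∑' n : ℕ, z ^ (n + 1) / ((n + 1 : ℕ) : ℂ) ^ s

/-!
Both sides are Dirichlet series. With `y = kx` we have `n · L_k(x:n) = (μ ⍟ y^·)(n)`, so the
left-hand series is the L-series of the odd part of `μ ⍟ y^·`; taking odd parts commutes with
Dirichlet convolution because all divisors of an odd number are odd, so the series factors as
`L(μ_odd, s) · L((y^·)_odd, s)`. Splitting off even indices, `μ(2n) = -μ_odd(n)` gives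
`ζ(s) L(μ_odd, s) = 1 / (1 - 2^{-s})`, while `y^{2n} = (y²)^n` gives
`L((y^·)_odd, s) = Li_s(y) - 2^{-s} Li_s(y²)`.
-/

open Complex LSeries ArithmeticFunction
open scoped LSeries.notation ArithmeticFunction.Moebius

def oddPart {R : Type*} [Zero R] (f : ℕ → R) (n : ℕ) : R := if Odd n then f n else 0

section OddPart

variable {R : Type*}

@[simp]
lemma oddPart_two_mul_add_one [Zero R] (f : ℕ → R) (n : ℕ) :
    oddPart f (2 * n + 1) = f (2 * n + 1) :=
  if_pos (odd_two_mul_add_one n)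

lemma oddPart_convolution [Semiring R] (f g : ℕ → R) : oddPart f ⍟ oddPart g = oddPart (f ⍟ g) := by
  ext n
  simp only [convolution_def, oddPart]
  split_ifs with hn
  · refine Finset.sum_congr rfl fun p hp => ?_
    rw [← (Nat.mem_divisorsAntidiagonal.mp hp).1, Nat.odd_mul] at hn
    simp [hn.1, hn.2]
  · refine Finset.sum_eq_zero fun p hp => ?_
    rw [← (Nat.mem_divisorsAntidiagonal.mp hp).1, Nat.odd_mul, not_and_or] at hn
    rcases hn with h | h <;> simp [h]

end OddPart

section LSeries

variable {f : ℕ → ℂ} {s : ℂ}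

lemma LSeriesSummable.oddPart (hf : LSeriesSummable f s) : LSeriesSummable (oddPart f) s :=
  hf.norm.of_norm_bounded fun n => norm_term_le s (by unfold _root_.oddPart; split_ifs <;> simp)

lemma LSeries_oddPart (f : ℕ → ℂ) (s : ℂ) : L (oddPart f) s = ∑' n, term f s (2 * n + 1) := by
  have hinj : Function.Injective (fun n : ℕ => 2 * n + 1) := fun a b h => by simp only at h; omega
  rw [LSeries, ← hinj.tsum_eq]
  · simp
  · intro n hn
    have hodd : Odd n := by
      by_contra h
      simp [term_def, oddPart, h] at hn
    obtain ⟨m, rfl⟩ := hodd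
    exact ⟨m, rfl⟩

lemma term_two_mul (f : ℕ → ℂ) (s : ℂ) (n : ℕ) :
    term f s (2 * n) = (2 ^ s)⁻¹ * term (fun m => f (2 * m)) s n := by
  rcases eq_or_ne n 0 with rfl | hn
  · simp
  · rw [term_of_ne_zero (by positivity), term_of_ne_zero hn, Nat.cast_mul,
      natCast_mul_natCast_cpow, Nat.cast_ofNat]
    field_simp

lemma LSeries_eq_two_cpow_inv_mul_add_LSeries_oddPart (hf : LSeriesSummable f s) :
    L f s = (2 ^ s)⁻¹ * L (fun n => f (2 * n)) s + L (oddPart f) s := by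
  have hinj₀ : Function.Injective (fun n : ℕ => 2 * n) := fun a b h => by simp only at h; omega
  have hinj₁ : Function.Injective (fun n : ℕ => 2 * n + 1) := fun a b h => by simp only at h; omega
  rw [LSeries, ← tsum_even_add_odd (hf.comp_injective hinj₀) (hf.comp_injective hinj₁),
    LSeries_oddPart, LSeries, ← tsum_mul_left]
  simp only [term_two_mul]

end LSeries

lemma one_lt_norm_two_cpow {s : ℂ} (hs : 0 < s.re) : 1 < ‖(2 : ℂ) ^ s‖ := by
  rw [show (2 : ℂ) = ((2 : ℕ) : ℂ) by norm_num, norm_natCast_cpow_of_pos two_pos]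
  exact Real.one_lt_rpow (by norm_num) hs

lemma moebius_two_mul (n : ℕ) : μ (2 * n) = if Odd n then -μ n else 0 := by
  by_cases hn : Odd n
  · rw [if_pos hn, isMultiplicative_moebius.map_mul_of_coprime (Nat.coprime_two_left.mpr hn),
      moebius_apply_prime Nat.prime_two, neg_one_mul]
  · obtain ⟨m, rfl⟩ := Nat.not_odd_iff_even.mp hn
    rw [if_neg hn, moebius_eq_zero_of_not_squarefree]
    intro h
    exact absurd (Nat.isUnit_iff.mp (h 2 ⟨m, by ring⟩)) (by norm_num)

lemma LSeries_moebius_eq_mul_LSeries_oddPart {s : ℂ} (hs : 1 < s.re) :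
    L ↗μ s = (1 - (2 ^ s)⁻¹) * L (oddPart ↗μ) s := by
  have heven : (fun n => (↗μ (2 * n) : ℂ)) = -oddPart ↗μ := by
    ext n
    simp only [moebius_two_mul, oddPart, Pi.neg_apply]
    split_ifs <;> simp
  rw [LSeries_eq_two_cpow_inv_mul_add_LSeries_oddPart (LSeriesSummable_moebius_iff.mpr hs),
    heven, LSeries_neg]
  ring

lemma riemannZeta_mul_LSeries_oddPart_moebius {s : ℂ} (hs : 1 < s.re) :
    riemannZeta s * L (oddPart ↗μ) s = 2 ^ s / (2 ^ s - 1) := by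
  have h := LSeries_zeta_mul_Lseries_moebius hs
  rw [LSeries_zeta_eq_riemannZeta hs, LSeries_moebius_eq_mul_LSeries_oddPart hs] at h
  have h21 : (2 : ℂ) ^ s - 1 ≠ 0 := by
    intro h0
    simpa [sub_eq_zero.mp h0] using one_lt_norm_two_cpow (s := s) (by linarith)
  field_simp at h ⊢
  linear_combination h

lemma LSeriesSummable_pow_s5 {y s : ℂ} (hy : ‖y‖ ≤ 1) (hs : 1 < s.re) :
    LSeriesSummable (y ^ ·) s :=
  LSeriesSummable_of_bounded_of_one_lt_re (m := 1)
    (fun n _ => by simpa using pow_le_one₀ (norm_nonneg y) hy) hs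

lemma LSeries_pow (y s : ℂ) : L (y ^ ·) s = Li s y := by
  rw [LSeries, Li, ← Nat.succ_injective.tsum_eq]
  · exact tsum_congr fun n => term_of_ne_zero n.succ_ne_zero _ _
  · intro n hn
    have hn0 : n ≠ 0 := by rintro rfl; simp at hn
    obtain ⟨m, rfl⟩ := Nat.exists_eq_succ_of_ne_zero hn0
    exact ⟨m, rfl⟩

lemma LSeries_oddPart_pow {y s : ℂ} (hy : ‖y‖ ≤ 1) (hs : 1 < s.re) :
    L (oddPart (y ^ ·)) s = Li s y - (2 ^ s)⁻¹ * Li s (y ^ 2) := by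
  have h := LSeries_eq_two_cpow_inv_mul_add_LSeries_oddPart (LSeriesSummable_pow_s5 hy hs)
  simp only [pow_mul, LSeries_pow] at h
  linear_combination -h

lemma Lk_div_cpow_eq_term (k : ℕ) (x : ℝ) (s : ℂ) {n : ℕ} (hn : n ≠ 0) :
    (Lk k x n : ℂ) / (n : ℂ) ^ (s - 1) = term (↗μ ⍟ ((((k : ℝ) * x : ℝ) : ℂ) ^ ·)) s n := by
  have hn' : (n : ℂ) ≠ 0 := Nat.cast_ne_zero.mpr hn
  rw [term_of_ne_zero hn, convolution_def]
  beta_reduce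
  rw [Nat.sum_divisorsAntidiagonal' (f := fun a b => ↗μ a * (((k : ℝ) * x : ℝ) : ℂ) ^ b),
    cpow_sub _ _ hn', cpow_one, Lk]
  push_cast
  field_simp
  simp only [mul_pow, mul_assoc]

theorem stmt5_general (k : ℕ) (x : ℝ) (hx : |(k : ℝ) * x| < 1)
    (s : ℂ) (hs : 1 < s.re) :
    riemannZeta s * ∑' n : ℕ, ((Lk k x (2 * n + 1) : ℝ) : ℂ) / ((2 * n + 1 : ℕ) : ℂ) ^ (s - 1)
      = ((2 : ℂ) ^ s * Li s (((k : ℝ) * x : ℝ) : ℂ) - Li s ((((k : ℝ) * x : ℝ) : ℂ) ^ 2)) /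
          ((2 : ℂ) ^ s - 1) := by
  set y : ℂ := (((k : ℝ) * x : ℝ) : ℂ)
  have hy : ‖y‖ ≤ 1 := by simpa [y] using hx.le
  have hseries : ∑' n : ℕ, ((Lk k x (2 * n + 1) : ℝ) : ℂ) / ((2 * n + 1 : ℕ) : ℂ) ^ (s - 1)
      = L (oddPart ↗μ) s * L (oddPart (y ^ ·)) s := by
    rw [← LSeries_convolution' (LSeriesSummable_moebius_iff.mpr hs).oddPart
      (LSeriesSummable_pow_s5 hy hs).oddPart, oddPart_convolution, LSeries_oddPart]
    exact tsum_congr fun n => Lk_div_cpow_eq_term k x s (2 * n).succ_ne_zero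
  rw [hseries, ← mul_assoc, riemannZeta_mul_LSeries_oddPart_moebius hs, LSeries_oddPart_pow hy hs]
  field_simp

theorem stmt5 (k : ℕ) (hk : 0 < k) (x : ℝ) (hx : |(k : ℝ) * x| < 1)
    (s : ℂ) (hs : 1 < s.re) :
    riemannZeta s * ∑' n : ℕ, ((Lk k x (2 * n + 1) : ℝ) : ℂ) / ((2 * n + 1 : ℕ) : ℂ) ^ (s - 1)
      = ((2 : ℂ) ^ s * Li s (((k : ℝ) * x : ℝ) : ℂ) - Li s ((((k : ℝ) * x : ℝ) : ℂ) ^ 2)) /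
          ((2 : ℂ) ^ s - 1) :=
  stmt5_general k x hx s hs
end

section
/- Let k be a positive integer, x a real number with |kx| < 1, and s a complex number with Re(s) > 2. Then ζ(s−1) · Σ_{n=1}^∞ (n·L_k(x:n))/n^s = Σ_{n=1}^∞ (n·N_k(x:n))/n^s, where ζ is the Riemann zeta function. -/
open scoped BigOperators

/-- `N_k(x : n) = (1/n) * ∑_{d ∣ n} φ(n/d) k^d x^d`. -/
noncomputable def Nk (k : ℕ) (x : ℝ) (n : ℕ) : ℝ :=
  (1 / (n : ℝ)) * ∑ d ∈ n.divisors, (Nat.totient (n / d) : ℝ) * (k : ℝ) ^ d * x ^ d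

/-!
Writing `g n = (k x) ^ n`, the coefficients `n L_k(x:n)` and `n N_k(x:n)` are the Dirichlet
convolutions `μ ⋆ g` and `φ ⋆ g`. Since `φ = μ ⋆ id`, we get `φ ⋆ g = id ⋆ (μ ⋆ g)`, and the
L-series of `id` at `s` is `ζ(s - 1)`. As `|k x| ≤ 1`, `|(μ ⋆ g) n|` is at most the number of
divisors of `n`, hence at most `n`, so both L-series converge absolutely for `Re s > 2` and the
L-series of the convolution is the product.
-/

open Finset LSeries
open scoped ArithmeticFunction.Moebius ArithmeticFunction.zeta LSeries.notation

namespace ArithmeticFunction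

variable {R : Type*}

def geom [MonoidWithZero R] (y : R) : ArithmeticFunction R :=
  ⟨fun n ↦ if n = 0 then 0 else y ^ n, if_pos rfl⟩

lemma geom_apply_of_ne_zero [MonoidWithZero R] (y : R) {n : ℕ} (hn : n ≠ 0) :
    geom y n = y ^ n :=
  if_neg hn

lemma norm_geom_apply_le_one [SeminormedRing R] [NormOneClass R] {y : R}
    (hy : ‖y‖ ≤ 1) (n : ℕ) : ‖geom y n‖ ≤ 1 := by
  rcases eq_or_ne n 0 with rfl | hn
  · simp
  · rw [geom_apply_of_ne_zero y hn]
    exact (norm_pow_le y n).trans (pow_le_one₀ (norm_nonneg y) hy)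

lemma mul_apply_eq_sum_divisors [Semiring R] (f g : ArithmeticFunction R) (n : ℕ) :
    (f * g) n = ∑ d ∈ n.divisors, f (n / d) * g d := by
  rw [mul_apply, Nat.sum_divisorsAntidiagonal' (fun a b ↦ f a * g b)]

lemma norm_mul_apply_le_self [SeminormedRing R] {f g : ArithmeticFunction R}
    (hf : ∀ n, ‖f n‖ ≤ 1) (hg : ∀ n, ‖g n‖ ≤ 1) (n : ℕ) : ‖(f * g) n‖ ≤ n := by
  rw [mul_apply_eq_sum_divisors]
  calc ‖∑ d ∈ n.divisors, f (n / d) * g d‖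
      ≤ ∑ d ∈ n.divisors, ‖f (n / d) * g d‖ := norm_sum_le _ _
    _ ≤ ∑ _d ∈ n.divisors, (1 : ℝ) := sum_le_sum fun d _ ↦
        (norm_mul_le _ _).trans (mul_le_one₀ (hf _) (norm_nonneg _) (hg _))
    _ ≤ n := by simpa using Nat.card_divisors_le_self n

def totient : ArithmeticFunction ℕ :=
  ⟨Nat.totient, Nat.totient_zero⟩

lemma totient_apply (n : ℕ) : totient n = n.totient :=
  rfl

lemma zeta_mul_totient : ζ * totient = ArithmeticFunction.id := by
  ext n
  rw [zeta_mul_apply, id_apply]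
  exact Nat.sum_totient n

lemma coe_moebius_mul_coe_id [Ring R] :
    (μ * ArithmeticFunction.id : ArithmeticFunction R) = totient := by
  rw [← zeta_mul_totient, natCoe_mul, ← mul_assoc, coe_moebius_mul_coe_zeta, one_mul]

end ArithmeticFunction

lemma LSeries.term_natCast_mul (f : ℕ → ℂ) (s : ℂ) (n : ℕ) :
    term (fun n ↦ n * f n) s n = term f (s - 1) n := by
  rcases eq_or_ne n 0 with rfl | hn
  · simp only [term_zero]
  · have hn' : (n : ℂ) ≠ 0 := Nat.cast_ne_zero.mpr hn
    rw [term_of_ne_zero hn, term_of_ne_zero hn, Complex.cpow_sub _ _ hn', Complex.cpow_one]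
    field_simp

lemma LSeries_natCast_mul (f : ℕ → ℂ) (s : ℂ) :
    LSeries (fun n ↦ n * f n) s = LSeries f (s - 1) :=
  tsum_congr (term_natCast_mul f s)

lemma LSeriesSummable_natCast_mul_iff {f : ℕ → ℂ} {s : ℂ} :
    LSeriesSummable (fun n ↦ n * f n) s ↔ LSeriesSummable f (s - 1) := by
  simp only [LSeriesSummable, funext (term_natCast_mul f s)]

lemma LSeries.coe_id_eq_natCast_mul_one :
    ↗(ArithmeticFunction.id : ArithmeticFunction ℂ) = fun n ↦ n * (1 : ℕ → ℂ) n := by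
  ext n
  simp

lemma LSeries_id_eq_riemannZeta {s : ℂ} (hs : 2 < s.re) :
    LSeries ↗(ArithmeticFunction.id : ArithmeticFunction ℂ) s = riemannZeta (s - 1) := by
  rw [coe_id_eq_natCast_mul_one, LSeries_natCast_mul, LSeries_one_eq_riemannZeta]
  simp only [Complex.sub_re, Complex.one_re]
  linarith

lemma LSeriesSummable_id {s : ℂ} (hs : 2 < s.re) :
    LSeriesSummable ↗(ArithmeticFunction.id : ArithmeticFunction ℂ) s := by
  rw [coe_id_eq_natCast_mul_one, LSeriesSummable_natCast_mul_iff, LSeriesSummable_one_iff]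
  simp only [Complex.sub_re, Complex.one_re]
  linarith

lemma LSeriesSummable_of_norm_le_self {f : ℕ → ℂ} {s : ℂ} (hs : 2 < s.re)
    (hf : ∀ n, ‖f n‖ ≤ n) : LSeriesSummable f s := by
  refine LSeriesSummable_of_le_const_mul_rpow hs ⟨1, fun n _ ↦ ?_⟩
  simpa [show (2 : ℝ) - 1 = 1 by norm_num] using hf n

lemma LSeries_eq_tsum_succ (f : ℕ → ℂ) (s : ℂ) :
    LSeries f s = ∑' n : ℕ, f (n + 1) / ((n + 1 : ℕ) : ℂ) ^ s := by
  rw [LSeries, ← (add_left_injective 1).tsum_eq]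
  · exact tsum_congr fun n ↦ term_of_ne_zero n.succ_ne_zero f s
  · rintro (_ | m) hm
    · exact absurd (term_zero f s) hm
    · exact ⟨m, rfl⟩

open ArithmeticFunction

lemma LSeriesSummable_moebius_mul_geom {y : ℂ} (hy : ‖y‖ ≤ 1) {s : ℂ} (hs : 2 < s.re) :
    LSeriesSummable ↗((μ : ArithmeticFunction ℂ) * geom y) s := by
  refine LSeriesSummable_of_norm_le_self hs
    (norm_mul_apply_le_self (fun n ↦ ?_) (norm_geom_apply_le_one hy))
  rw [intCoe_apply, Complex.norm_intCast]
  exact_mod_cast abs_moebius_le_one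

lemma natCast_mul_Lk_s12 (k : ℕ) (x : ℝ) {n : ℕ} (hn : n ≠ 0) :
    (n : ℂ) * (Lk k x n : ℂ) = ((μ : ArithmeticFunction ℂ) * geom ((k * x : ℝ) : ℂ)) n := by
  rw [mul_apply_eq_sum_divisors, Lk]
  push_cast
  rw [← mul_assoc, mul_one_div_cancel (by exact_mod_cast hn), one_mul]
  refine sum_congr rfl fun d hd ↦ ?_
  rw [geom_apply_of_ne_zero _ (Nat.pos_of_mem_divisors hd).ne', intCoe_apply]
  ring

lemma natCast_mul_Nk (k : ℕ) (x : ℝ) {n : ℕ} (hn : n ≠ 0) :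
    (n : ℂ) * (Nk k x n : ℂ) = ((totient : ArithmeticFunction ℂ) * geom ((k * x : ℝ) : ℂ)) n := by
  rw [mul_apply_eq_sum_divisors, Nk]
  push_cast
  rw [← mul_assoc, mul_one_div_cancel (by exact_mod_cast hn), one_mul]
  refine sum_congr rfl fun d hd ↦ ?_
  rw [geom_apply_of_ne_zero _ (Nat.pos_of_mem_divisors hd).ne', natCoe_apply, totient_apply]
  ring

theorem stmt12_general (k : ℕ) (x : ℝ) (hx : |(k : ℝ) * x| < 1)
    (s : ℂ) (hs : 2 < s.re) :
    riemannZeta (s - 1) *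
        ∑' n : ℕ, (((n + 1 : ℕ) : ℂ) * ((Lk k x (n + 1) : ℝ) : ℂ)) / ((n + 1 : ℕ) : ℂ) ^ s
      = ∑' n : ℕ, (((n + 1 : ℕ) : ℂ) * ((Nk k x (n + 1) : ℝ) : ℂ)) / ((n + 1 : ℕ) : ℂ) ^ s := by
  have hy : ‖((k * x : ℝ) : ℂ)‖ ≤ 1 := by
    rw [Complex.norm_real, Real.norm_eq_abs]
    exact hx.le
  have key : LSeries ↗((totient : ArithmeticFunction ℂ) * geom ((k * x : ℝ) : ℂ)) s
      = LSeries ↗(ArithmeticFunction.id : ArithmeticFunction ℂ) s *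
        LSeries ↗((μ : ArithmeticFunction ℂ) * geom ((k * x : ℝ) : ℂ)) s := by
    rw [← coe_moebius_mul_coe_id, mul_comm (μ : ArithmeticFunction ℂ), mul_assoc,
      LSeries_mul' (LSeriesSummable_id hs) (LSeriesSummable_moebius_mul_geom hy hs)]
  rw [LSeries_id_eq_riemannZeta hs, LSeries_eq_tsum_succ, LSeries_eq_tsum_succ] at key
  simp only [← natCast_mul_Lk_s12 k x (Nat.succ_ne_zero _),
    ← natCast_mul_Nk k x (Nat.succ_ne_zero _)] at key
  exact key.symm

theorem stmt12 (k : ℕ) (hk : 0 < k) (x : ℝ) (hx : |(k : ℝ) * x| < 1)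
    (s : ℂ) (hs : 2 < s.re) :
    riemannZeta (s - 1) *
        ∑' n : ℕ, (((n + 1 : ℕ) : ℂ) * ((Lk k x (n + 1) : ℝ) : ℂ)) / ((n + 1 : ℕ) : ℂ) ^ s
      = ∑' n : ℕ, (((n + 1 : ℕ) : ℂ) * ((Nk k x (n + 1) : ℝ) : ℂ)) / ((n + 1 : ℕ) : ℂ) ^ s :=
  stmt12_general k x hx s hs
end

section
/- Let k be a positive integer and x a real number with |kx| < 1. Then Σ_{n=1}^∞ n · L_k(n) · x^n/(1 − x^n) = kx/(1 − kx), where the series on the left converges absolutely. (Note that |kx| < 1 and k ≥ 1 imply |x| < 1, so each denominator 1 − x^n is nonzero.) -/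
open scoped BigOperators

/-- The number of Lyndon words of length `n` over a `k`-letter alphabet,
`L_k(n) = (1/n) * ∑_{d ∣ n} μ(n/d) k^d`, as a real number. -/
noncomputable def LkNum (k : ℕ) (n : ℕ) : ℝ :=
  (1 / (n : ℝ)) * ∑ d ∈ n.divisors, ((ArithmeticFunction.moebius (n / d) : ℤ) : ℝ) * (k : ℝ) ^ d

/-!
Write `a n = n * L_k(n) = ∑_{d ∣ n} μ(n/d) k^d`; Möbius inversion gives `∑_{d ∣ n} a d = k^n`.
Expanding each `x^n / (1 - x^n)` as a geometric series turns the Lambert series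
`∑ a n x^n / (1 - x^n)` into the double series `∑_{d, c ≥ 1} a d x^(d c)`, which converges
absolutely because `|a n| ≤ n k^n` and `|k x| < 1`. Summed along the hyperbolas `d c = N`
instead, it becomes `∑_{N ≥ 1} (k x)^N = k x / (1 - k x)`.
-/

section LambertSeries

variable {𝕜 : Type*} [NormedField 𝕜] {x : 𝕜}

theorem hasSum_pnat_geometric_of_norm_lt_one (hx : ‖x‖ < 1) :
    HasSum (fun n : ℕ+ => x ^ (n : ℕ)) (x / (1 - x)) := by
  rw [hasSum_pnat_iff_hasSum_succ (f := (x ^ ·))]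
  simpa [pow_succ', div_eq_mul_inv] using (hasSum_geometric_of_norm_lt_one hx).mul_left x

theorem hasSum_mul_pow_mul_pnat (hx : ‖x‖ < 1) (a : 𝕜) (d : ℕ+) :
    HasSum (fun c : ℕ+ => a * x ^ (d * c : ℕ)) (a * (x ^ (d : ℕ) / (1 - x ^ (d : ℕ)))) := by
  have hxd : ‖x ^ (d : ℕ)‖ < 1 := by
    rw [norm_pow]; exact pow_lt_one₀ (norm_nonneg x) hx d.ne_zero
  simpa only [pow_mul] using (hasSum_pnat_geometric_of_norm_lt_one hxd).mul_left a

variable {f : ℕ → 𝕜}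

theorem summable_lambert_majorant (hx : ‖x‖ < 1)
    (hf : Summable fun n => ‖f n‖ * ‖x‖ ^ n) :
    Summable fun n : ℕ+ => ‖f n‖ * (‖x‖ ^ (n : ℕ) / (1 - ‖x‖ ^ (n : ℕ))) := by
  refine ((hf.comp_injective PNat.coe_injective).mul_right (1 - ‖x‖)⁻¹).of_nonneg_of_le
    (fun n => ?_) fun n => ?_
  · have : 0 < 1 - ‖x‖ ^ (n : ℕ) := sub_pos.mpr (pow_lt_one₀ (norm_nonneg x) hx n.ne_zero)
    positivity
  · rw [Function.comp_apply, mul_assoc, ← div_eq_mul_inv]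
    gcongr
    exact pow_le_of_le_one (norm_nonneg x) hx.le n.ne_zero

theorem summable_norm_lambert (hx : ‖x‖ < 1)
    (hf : Summable fun n => ‖f n‖ * ‖x‖ ^ n) :
    Summable fun n : ℕ+ => ‖f n * (x ^ (n : ℕ) / (1 - x ^ (n : ℕ)))‖ := by
  refine (summable_lambert_majorant hx hf).of_nonneg_of_le (fun n => norm_nonneg _) fun n => ?_
  have : ‖x‖ ^ (n : ℕ) < 1 := pow_lt_one₀ (norm_nonneg x) hx n.ne_zero
  rw [norm_mul, norm_div, norm_pow]
  gcongr
  simpa using norm_sub_norm_le (1 : 𝕜) (x ^ (n : ℕ))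

variable [CompleteSpace 𝕜]

theorem summable_lambert_double (hx : ‖x‖ < 1)
    (hf : Summable fun n => ‖f n‖ * ‖x‖ ^ n) :
    Summable fun c : ℕ+ × ℕ+ => f c.1 * x ^ (c.1 * c.2 : ℕ) := by
  have hrow (d : ℕ+) := hasSum_mul_pow_mul_pnat (x := ‖x‖) (by rwa [norm_norm]) ‖f d‖ d
  refine .of_norm <| (summable_prod_of_nonneg fun _ => norm_nonneg _).mpr ⟨?_, ?_⟩
  · simpa only [norm_mul, norm_pow] using fun d => (hrow d).summable
  · simpa only [norm_mul, norm_pow, (hrow _).tsum_eq] using summable_lambert_majorant hx hf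

theorem hasSum_lambert_iff (hx : ‖x‖ < 1)
    (hf : Summable fun n => ‖f n‖ * ‖x‖ ^ n) {a : 𝕜} :
    HasSum (fun n : ℕ+ => f n * (x ^ (n : ℕ) / (1 - x ^ (n : ℕ)))) a ↔
      HasSum (fun n : ℕ+ => (∑ d ∈ (n : ℕ).divisors, f d) * x ^ (n : ℕ)) a := by
  have hG := (summable_lambert_double hx hf).hasSum
  have hrows := hG.prod_fiberwise fun d => hasSum_mul_pow_mul_pnat hx (f d) d
  have hdiag := (sigmaAntidiagonalEquivProd.hasSum_iff.mpr hG).sigma fun n => hasSum_fintype _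
  have hdiag_eq (n : ℕ+) : ∑ b, ((fun c : ℕ+ × ℕ+ => f c.1 * x ^ (c.1 * c.2 : ℕ)) ∘
      sigmaAntidiagonalEquivProd) ⟨n, b⟩ = (∑ d ∈ (n : ℕ).divisors, f d) * x ^ (n : ℕ) := by
    rw [Finset.sum_mul, ← Nat.sum_divisorsAntidiagonal (fun d (_ : ℕ) => f d * x ^ (n : ℕ)),
      ← Finset.sum_attach (n : ℕ).divisorsAntidiagonal]
    refine Finset.sum_congr (Finset.univ_eq_attach _) fun b _ => ?_
    simp [sigmaAntidiagonalEquivProd, divisorsAntidiagonalFactors,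
      (Nat.mem_divisorsAntidiagonal.mp b.2).1]
  rw [funext hdiag_eq] at hdiag
  constructor <;> intro h
  · rwa [h.unique hrows]
  · rwa [h.unique hdiag]

end LambertSeries

noncomputable def primitiveWordCount (k n : ℕ) : ℝ :=
  ∑ d ∈ n.divisors, ((ArithmeticFunction.moebius (n / d) : ℤ) : ℝ) * (k : ℝ) ^ d

theorem natCast_mul_LkNum (k : ℕ) {n : ℕ} (hn : n ≠ 0) :
    (n : ℝ) * LkNum k n = primitiveWordCount k n := by
  rw [LkNum, primitiveWordCount, ← mul_assoc, mul_one_div_cancel (Nat.cast_ne_zero.mpr hn),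
    one_mul]

theorem sum_divisors_primitiveWordCount (k : ℕ) {n : ℕ} (hn : 0 < n) :
    ∑ d ∈ n.divisors, primitiveWordCount k d = (k : ℝ) ^ n := by
  refine (ArithmeticFunction.sum_eq_iff_sum_mul_moebius_eq
    (f := primitiveWordCount k) (g := fun n => (k : ℝ) ^ n)).mpr (fun m _ => ?_) n hn
  rw [primitiveWordCount, ← Nat.sum_divisorsAntidiagonal'
    (f := fun a b => ((ArithmeticFunction.moebius a : ℤ) : ℝ) * (k : ℝ) ^ b)]

theorem abs_primitiveWordCount_le {k : ℕ} (hk : 1 ≤ k) (n : ℕ) :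
    |primitiveWordCount k n| ≤ n * (k : ℝ) ^ n := by
  refine (Finset.abs_sum_le_sum_abs _ _).trans ?_
  calc ∑ d ∈ n.divisors, |((ArithmeticFunction.moebius (n / d) : ℤ) : ℝ) * (k : ℝ) ^ d|
      ≤ ∑ _d ∈ n.divisors, (k : ℝ) ^ n := by
        refine Finset.sum_le_sum fun d hd => ?_
        rw [abs_mul, abs_pow, Nat.abs_cast]
        have hμ : |((ArithmeticFunction.moebius (n / d) : ℤ) : ℝ)| ≤ 1 := by
          exact_mod_cast ArithmeticFunction.abs_moebius_le_one
        exact (mul_le_of_le_one_left (by positivity) hμ).trans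
          (pow_le_pow_right₀ (by exact_mod_cast hk) (Nat.divisor_le hd))
    _ ≤ n * (k : ℝ) ^ n := by
        rw [Finset.sum_const, nsmul_eq_mul]
        gcongr
        exact_mod_cast Nat.card_divisors_le_self n

theorem summable_abs_primitiveWordCount_mul_pow {k : ℕ} (hk : 1 ≤ k) {x : ℝ}
    (hx : |(k : ℝ) * x| < 1) : Summable fun n => |primitiveWordCount k n| * |x| ^ n := by
  have hgeom : ‖(k : ℝ) * |x|‖ < 1 := by simpa [abs_mul] using hx
  refine (summable_pow_mul_geometric_of_norm_lt_one 1 hgeom).of_nonneg_of_le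
    (fun n => by positivity) fun n => ?_
  rw [pow_one, mul_pow, ← mul_assoc]
  gcongr
  exact abs_primitiveWordCount_le hk n

theorem stmt14 (k : ℕ) (hk : 0 < k) (x : ℝ) (hx : |(k : ℝ) * x| < 1) :
    Summable (fun n : ℕ =>
      |((n + 1 : ℕ) : ℝ) * LkNum k (n + 1) * (x ^ (n + 1) / (1 - x ^ (n + 1)))|) ∧
    ∑' n : ℕ, ((n + 1 : ℕ) : ℝ) * LkNum k (n + 1) * (x ^ (n + 1) / (1 - x ^ (n + 1)))
      = (k : ℝ) * x / (1 - (k : ℝ) * x) := by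
  have hx₁ : ‖x‖ < 1 := by
    calc ‖x‖ ≤ k * |x| := le_mul_of_one_le_left (abs_nonneg x) (by exact_mod_cast hk)
      _ = |k * x| := by rw [abs_mul, Nat.abs_cast]
      _ < 1 := hx
  have hf := summable_abs_primitiveWordCount_mul_pow hk hx
  simp only [← Real.norm_eq_abs] at hf
  have hsum : HasSum (fun n => primitiveWordCount k (n + 1) * (x ^ (n + 1) / (1 - x ^ (n + 1))))
      (k * x / (1 - k * x)) := by
    rw [← hasSum_pnat_iff_hasSum_succ
      (f := fun n => primitiveWordCount k n * (x ^ n / (1 - x ^ n))), hasSum_lambert_iff hx₁ hf]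
    convert hasSum_pnat_geometric_of_norm_lt_one (x := (k : ℝ) * x) hx using 2 with n
    rw [sum_divisors_primitiveWordCount k n.pos, mul_pow]
  have habs : Summable fun n =>
      |primitiveWordCount k (n + 1) * (x ^ (n + 1) / (1 - x ^ (n + 1)))| := by
    simpa only [Real.norm_eq_abs] using (summable_pnat_iff_summable_succ
      (f := fun n => ‖primitiveWordCount k n * (x ^ n / (1 - x ^ n))‖)).mp
      (summable_norm_lambert hx₁ hf)
  simp only [natCast_mul_LkNum k (Nat.succ_ne_zero _)]
  exact ⟨habs, hsum.tsum_eq⟩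
end

section
/- Let m be a nonnegative integer and λ a complex number with λ ≠ 1. Define the Apostol–Bernoulli number 𝓑_{m+1}(λ) as the (m+1)-st iterated derivative at t = 0 of the function t ↦ t/(λe^t − 1) (which is analytic in a neighborhood of 0 since λ ≠ 1, taking the value 0 at t = 0). Then 𝓑_{m+1}(λ) = −((m+1)/(1 − λ)^{m+1}) · Σ_{j=0}^{m} A(m,j) · λ^{m−j}, where A(m,j) denotes the Eulerian number, i.e., the number of permutations σ of {1, 2, …, m} having exactly j descents (positions i with 1 ≤ i ≤ m−1 and σ(i) > σ(i+1)). -/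
open scoped BigOperators

/-- The number of descents of a permutation `σ` of `Fin m`, i.e. the number of
positions `i` with `i + 1 < m` and `σ i > σ (i + 1)`. -/
def descentCount (m : ℕ) (σ : Equiv.Perm (Fin m)) : ℕ :=
  (Finset.univ.filter (fun i : Fin (m - 1) =>
    σ ⟨i.1 + 1, by have := i.isLt; omega⟩ < σ ⟨i.1, by have := i.isLt; omega⟩)).card

/-- The Eulerian number `A(m, j)`: the number of permutations of `{1, …, m}`
with exactly `j` descents. -/
def eulerianNumber (m j : ℕ) : ℕ :=
  (Finset.univ.filter (fun σ : Equiv.Perm (Fin m) => descentCount m σ = j)).card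

/-- The Apostol–Bernoulli number `𝓑_n(λ)`, defined as the `n`-th iterated
derivative at `0` of `t ↦ t / (λ e^t - 1)`. -/
noncomputable def apostolBernoulli (n : ℕ) (l : ℂ) : ℂ :=
  iteratedDeriv n (fun t : ℂ => t / (l * Complex.exp t - 1)) 0

/-!
Inserting the letter `m` into the word of a permutation of `Fin m` at each of the `m + 1`
positions produces every permutation of `Fin (m + 1)` exactly once. With `d` descents, the
descent count is unchanged at the `d + 1` positions that follow a descent or close the word, and
grows by one at the other `m - d`. For `E n = ∑_σ X ^ (n - des σ)` this is the Eulerian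
recurrence `E (n + 1) = X (1 - X) E' n + (n + 1) X E n`, which says precisely that
`t ↦ E n (λ eᵗ) / (1 - λ eᵗ) ^ (n + 1)` has as derivative the same expression for `n + 1`.
As `t / (λ eᵗ - 1) = -t · E 0 (λ eᵗ) / (1 - λ eᵗ)`, Leibniz's rule gives its `(m + 1)`-st
derivative at `0` as `-(m + 1) E m (λ) / (1 - λ) ^ (m + 1)`.
-/

open Finset Polynomial Equiv

def numDescents (w : ℕ → ℕ) (n : ℕ) : ℕ := #{i ∈ range n | w (i + 1) < w i}

lemma numDescents_zero (w : ℕ → ℕ) : numDescents w 0 = 0 := by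
  simp [numDescents]

lemma numDescents_succ (w : ℕ → ℕ) (n : ℕ) :
    numDescents w (n + 1) = numDescents w n + if w (n + 1) < w n then 1 else 0 := by
  simp only [numDescents, card_filter, sum_range_succ]

lemma numDescents_le (w : ℕ → ℕ) (n : ℕ) : numDescents w n ≤ n :=
  (card_filter_le _ _).trans (card_range n).le

lemma numDescents_congr {w w' : ℕ → ℕ} {n : ℕ} (h : ∀ i ≤ n, w i = w' i) :
    numDescents w n = numDescents w' n := by
  refine congrArg card (filter_congr fun i hi => ?_)
  rw [mem_range] at hi
  rw [h i hi.le, h (i + 1) hi]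

def insertAt (w : ℕ → ℕ) (k v : ℕ) (i : ℕ) : ℕ :=
  if i < k then w i else if i = k then v else w (i - 1)

lemma numDescents_insertAt_self {w : ℕ → ℕ} {k v : ℕ} (hv : 0 < k → w (k - 1) < v) :
    numDescents (insertAt w k v) k = numDescents w (k - 1) := by
  cases k with
  | zero => simp [numDescents_zero]
  | succ j =>
    have hv : ¬ v < w j := (hv j.succ_pos).not_gt
    rw [numDescents_succ, numDescents_congr (w := insertAt w (j + 1) v) (w' := w)
      fun i hi => if_pos (by omega)]
    simp [insertAt, hv]

lemma numDescents_insertAt {w : ℕ → ℕ} {k v n : ℕ} (hkn : k ≤ n) (hk : w k < v)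
    (hv : 0 < k → w (k - 1) < v) :
    numDescents (insertAt w k v) (n + 1) + (if 0 < k ∧ w k < w (k - 1) then 1 else 0)
      = numDescents w n + 1 := by
  induction n, hkn using Nat.le_induction with
  | base =>
    have hw : numDescents w k
        = numDescents w (k - 1) + if 0 < k ∧ w k < w (k - 1) then 1 else 0 := by
      cases k <;> simp [numDescents_zero, numDescents_succ]
    have h₁ : insertAt w k v (k + 1) = w k := by simp [insertAt]
    have h₂ : insertAt w k v k = v := by simp [insertAt]
    rw [numDescents_succ, numDescents_insertAt_self hv, hw, h₁, h₂, if_pos hk]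
    omega
  | succ n hkn ih =>
    have h₁ : insertAt w k v (n + 1 + 1) = w (n + 1) := by
      simp [insertAt, show ¬ n + 1 + 1 < k by omega, show n + 1 + 1 ≠ k by omega]
    have h₂ : insertAt w k v (n + 1) = w n := by
      simp [insertAt, show ¬ n + 1 < k by omega, show n + 1 ≠ k by omega]
    rw [numDescents_succ, numDescents_succ w, h₁, h₂]
    omega

section Perm

variable {m : ℕ}

def permWord (σ : Perm (Fin m)) (i : ℕ) : ℕ := if h : i < m then σ ⟨i, h⟩ else 0

lemma permWord_lt (σ : Perm (Fin m)) {i : ℕ} (hi : i < m) : permWord σ i < m := by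
  simp [permWord, hi]

lemma descentCount_eq_numDescents (σ : Perm (Fin m)) :
    descentCount m σ = numDescents (permWord σ) (m - 1) := by
  rw [descentCount, numDescents, card_filter, card_filter,
    ← Fin.sum_univ_eq_sum_range (fun i => if permWord σ (i + 1) < permWord σ i then 1 else 0)]
  refine sum_congr rfl fun i _ => ?_
  have := i.isLt
  simp [permWord, show i.1 + 1 < m by omega, show i.1 < m by omega]

lemma descentCount_le (σ : Perm (Fin m)) : descentCount m σ ≤ m - 1 :=
  descentCount_eq_numDescents σ ▸ numDescents_le _ _

/-- The permutation of `Fin (m + 1)` whose word is that of `σ` with the letter `m` inserted at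
position `k`. -/
def insertMax (σ : Perm (Fin m)) (k : Fin (m + 1)) : Perm (Fin (m + 1)) :=
  ((finSuccEquiv' k).trans (optionCongr σ)).trans (finSuccEquiv' (Fin.last m)).symm

lemma insertMax_self (σ : Perm (Fin m)) (k : Fin (m + 1)) : insertMax σ k k = Fin.last m := by
  simp [insertMax, finSuccEquiv'_at]

lemma insertMax_succAbove (σ : Perm (Fin m)) (k : Fin (m + 1)) (j : Fin m) :
    insertMax σ k (k.succAbove j) = (σ j).castSucc := by
  simp [insertMax, finSuccEquiv'_succAbove, Fin.succAbove_last]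

lemma insertMax_bijective :
    Function.Bijective fun p : Perm (Fin m) × Fin (m + 1) => insertMax p.1 p.2 := by
  refine (Fintype.bijective_iff_injective_and_card _).2 ⟨?_, ?_⟩
  · rintro ⟨σ, k⟩ ⟨σ', k'⟩ h
    simp only at h
    have hk : insertMax σ' k' k = Fin.last m := by rw [← h, insertMax_self]
    obtain rfl : k = k' := (insertMax σ' k').injective (hk.trans (insertMax_self σ' k').symm)
    have hσ : σ = σ' := Equiv.ext fun j => Fin.castSucc_injective m <| by
      rw [← insertMax_succAbove, ← insertMax_succAbove, h]
    rw [hσ]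
  · simp [Fintype.card_perm, Nat.factorial_succ, Nat.mul_comm]

lemma insertAt_succAbove (w : ℕ → ℕ) (v : ℕ) (k : Fin (m + 1)) (j : Fin m) :
    insertAt w k v (k.succAbove j) = w j := by
  rcases lt_or_ge j.castSucc k with h | h
  · rw [Fin.succAbove_of_castSucc_lt _ _ h]
    exact if_pos h
  · rw [Fin.succAbove_of_le_castSucc _ _ h]
    have h : (k : ℕ) ≤ j := h
    simp [insertAt, show ¬ (j : ℕ) + 1 < k by omega, show (j : ℕ) + 1 ≠ k by omega]

lemma permWord_insertMax (σ : Perm (Fin m)) (k : Fin (m + 1)) :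
    permWord (insertMax σ k) = insertAt (permWord σ) k m := by
  funext i
  by_cases hi : i < m + 1
  · obtain hk | ⟨j, hj⟩ := Fin.eq_self_or_eq_succAbove k ⟨i, hi⟩
    · obtain rfl : i = k := congrArg Fin.val hk
      simp [permWord, insertAt, insertMax_self, hi]
    · obtain rfl : i = k.succAbove j := congrArg Fin.val hj
      rw [insertAt_succAbove, permWord, dif_pos hi, Fin.eta, insertMax_succAbove]
      simp [permWord]
  · have hk := k.isLt
    simp [permWord, insertAt, hi, show ¬ i < k by omega, show i ≠ k by omega,
      show ¬ i - 1 < m by omega]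

/-- Inserting `m` at position `k` creates no new descent exactly at these positions. -/
def IsDescentSlot (σ : Perm (Fin m)) (k : ℕ) : Prop :=
  k = m ∨ (0 < k ∧ permWord σ k < permWord σ (k - 1))

instance (σ : Perm (Fin m)) : DecidablePred (IsDescentSlot σ) := fun _ => by
  unfold IsDescentSlot; infer_instance

lemma descentCount_insertMax (σ : Perm (Fin m)) (k : Fin (m + 1)) :
    descentCount (m + 1) (insertMax σ k)
      = if IsDescentSlot σ k then descentCount m σ else descentCount m σ + 1 := by
  rw [descentCount_eq_numDescents, descentCount_eq_numDescents, permWord_insertMax,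
    Nat.add_sub_cancel]
  have hv (h : 0 < (k : ℕ)) : permWord σ (k - 1) < m := permWord_lt σ (by omega)
  rcases (Nat.lt_succ_iff.1 k.isLt).lt_or_eq with hk | hk
  · have := numDescents_insertAt (Nat.le_sub_one_of_lt hk) (permWord_lt σ hk) hv
    rw [Nat.sub_add_cancel (by omega)] at this
    by_cases hd : 0 < (k : ℕ) ∧ permWord σ k < permWord σ (k - 1)
    · simp only [IsDescentSlot, hd, and_self, or_true, ↓reduceIte] at this ⊢
      omega
    · simp only [IsDescentSlot, hd, hk.ne, if_false, or_false] at this ⊢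
      omega
  · rw [if_pos (show IsDescentSlot σ k from Or.inl hk)]
    have := numDescents_insertAt_self (w := permWord σ) hv
    rwa [hk] at this ⊢

lemma card_isDescentSlot (σ : Perm (Fin m)) :
    #{k : Fin (m + 1) | IsDescentSlot σ k} = descentCount m σ + 1 := by
  rw [card_filter, Fin.sum_univ_eq_sum_range (fun k => if IsDescentSlot σ k then 1 else 0),
    sum_range_succ, if_pos (show IsDescentSlot σ m from Or.inl rfl), descentCount_eq_numDescents,
    numDescents, card_filter]
  congr 1
  cases m with
  | zero => rfl
  | succ m =>
    rw [sum_range_succ', if_neg (by simp [IsDescentSlot]), add_zero, Nat.add_sub_cancel]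
    refine sum_congr rfl fun i hi => ?_
    simp [IsDescentSlot, (mem_range.1 hi).ne]

end Perm

theorem sum_perm_succ_descentCount {M : Type*} [AddCommMonoid M] (m : ℕ) (F : ℕ → M) :
    ∑ τ : Perm (Fin (m + 1)), F (descentCount (m + 1) τ)
      = ∑ σ : Perm (Fin m), ((descentCount m σ + 1) • F (descentCount m σ)
          + (m - descentCount m σ) • F (descentCount m σ + 1)) := by
  rw [← Fintype.sum_bijective _ insertMax_bijective
    (fun p => F (descentCount (m + 1) (insertMax p.1 p.2))) _ fun _ => rfl, Fintype.sum_prod_type]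
  refine sum_congr rfl fun σ _ => ?_
  have hbad : #{k : Fin (m + 1) | ¬ IsDescentSlot σ k} = m - descentCount m σ := by
    have := card_filter_add_card_filter_not (s := (univ : Finset (Fin (m + 1))))
      (IsDescentSlot σ ∘ Fin.val)
    simp only [Function.comp_apply, card_isDescentSlot, card_univ, Fintype.card_fin] at this
    omega
  simp only [descentCount_insertMax, apply_ite F]
  rw [sum_ite, sum_const, sum_const, card_isDescentSlot, hbad]

/-- For `n ≥ 1`, by the symmetry `A(n, j) = A(n, n - 1 - j)`, this is the Eulerian polynomial
`∑_σ X ^ (des σ + 1)`. -/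
noncomputable def eulerianPolynomial (R : Type*) [CommSemiring R] (n : ℕ) : R[X] :=
  ∑ σ : Perm (Fin n), X ^ (n - descentCount n σ)

lemma eulerianPolynomial_zero (R : Type*) [CommSemiring R] : eulerianPolynomial R 0 = 1 := by
  simp [eulerianPolynomial]

lemma eulerianPolynomial_eq_sum (R : Type*) [CommSemiring R] (n : ℕ) :
    eulerianPolynomial R n
      = ∑ j ∈ range (n + 1), (eulerianNumber n j : R[X]) * X ^ (n - j) := by
  rw [eulerianPolynomial, ← sum_fiberwise_of_maps_to (t := range (n + 1))
    fun σ _ => mem_range.2 (Nat.lt_succ_of_le ((descentCount_le σ).trans (Nat.sub_le n 1)))]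
  refine sum_congr rfl fun j _ => ?_
  rw [sum_congr rfl fun σ hσ => by rw [(mem_filter.1 hσ).2], sum_const, nsmul_eq_mul]
  rfl

lemma X_mul_derivative_X_pow (R : Type*) [CommSemiring R] (a : ℕ) :
    X * derivative (X ^ a : R[X]) = (a : R[X]) * X ^ a := by
  rw [derivative_X_pow, map_natCast]
  cases a with
  | zero => simp
  | succ a => rw [Nat.add_sub_cancel, pow_succ]; ring

lemma eulerianPolynomial_succ (R : Type*) [CommRing R] (n : ℕ) :
    eulerianPolynomial R (n + 1)
      = X * (1 - X) * derivative (eulerianPolynomial R n)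
        + ((n : R[X]) + 1) * X * eulerianPolynomial R n := by
  rw [eulerianPolynomial, sum_perm_succ_descentCount n fun d => (X : R[X]) ^ (n + 1 - d),
    eulerianPolynomial, derivative_sum, mul_sum, mul_sum, ← sum_add_distrib]
  refine sum_congr rfl fun σ _ => ?_
  obtain ⟨a, ha⟩ : ∃ a, n = descentCount n σ + a :=
    ⟨n - descentCount n σ, by have := descentCount_le σ; omega⟩
  set d := descentCount n σ
  rw [ha, show d + a + 1 - d = a + 1 by omega, show d + a + 1 - (d + 1) = a by omega,
    show d + a - d = a by omega, nsmul_eq_mul, nsmul_eq_mul,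
    mul_comm X, mul_assoc, X_mul_derivative_X_pow]
  push_cast
  ring

lemma hasDerivAt_eval_eulerianPolynomial_div (l : ℂ) (n : ℕ) {t : ℂ}
    (ht : l * Complex.exp t ≠ 1) :
    HasDerivAt (fun t => (eulerianPolynomial ℂ n).eval (l * Complex.exp t)
        / (1 - l * Complex.exp t) ^ (n + 1))
      ((eulerianPolynomial ℂ (n + 1)).eval (l * Complex.exp t)
        / (1 - l * Complex.exp t) ^ (n + 2)) t := by
  set x := l * Complex.exp t with hx_def
  have hx : HasDerivAt (fun t => l * Complex.exp t) x t :=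
    (Complex.hasDerivAt_exp t).const_mul l
  have hnum : HasDerivAt (fun t => (eulerianPolynomial ℂ n).eval (l * Complex.exp t))
      ((derivative (eulerianPolynomial ℂ n)).eval x * x) t :=
    HasDerivAt.comp (h₂ := fun y => (eulerianPolynomial ℂ n).eval y) t
      ((eulerianPolynomial ℂ n).hasDerivAt x) hx
  have hden : HasDerivAt (fun t => (1 - l * Complex.exp t) ^ (n + 1))
      ((n + 1) * (1 - x) ^ n * -x) t := by
    simpa using (hx.const_sub 1).fun_pow (n + 1)
  have hx₁ : 1 - x ≠ 0 := sub_ne_zero.2 (Ne.symm ht)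
  refine (hnum.fun_div hden (pow_ne_zero _ hx₁)).congr_deriv ?_
  rw [eulerianPolynomial_succ]
  simp only [eval_add, eval_mul, eval_X, eval_sub, eval_one, eval_natCast, ← hx_def]
  field_simp
  ring

lemma eqOn_iterate_deriv_id_mul {𝕜 : Type*} [NontriviallyNormedField 𝕜] {g : ℕ → 𝕜 → 𝕜}
    {U : Set 𝕜} (hU : IsOpen U) (hg : ∀ n, ∀ t ∈ U, HasDerivAt (g n) (g (n + 1) t) t)
    (k : ℕ) :
    Set.EqOn (deriv^[k] fun t => t * g 0 t) (fun t => t * g k t + k * g (k - 1) t) U := by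
  induction k with
  | zero => intro t _; simp
  | succ k ih =>
    intro t ht
    rw [Function.iterate_succ_apply', (ih.eventuallyEq_of_mem (hU.mem_nhds ht)).deriv_eq]
    have hlast : HasDerivAt (fun t => (k : 𝕜) * g (k - 1) t) (k * g k t) t := by
      rcases k with _ | k
      · simp [hasDerivAt_const]
      · exact (hg k t ht).const_mul _
    have hmain : HasDerivAt (fun t => t * g k t) (1 * g k t + t * g (k + 1) t) t :=
      (hasDerivAt_id t).mul (hg k t ht)
    rw [(hmain.fun_add hlast).deriv]
    push_cast
    ring

theorem stmt17 (m : ℕ) (l : ℂ) (hl : l ≠ 1) :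
    apostolBernoulli (m + 1) l
      = -(((m : ℂ) + 1) / (1 - l) ^ (m + 1)) *
          ∑ j ∈ Finset.range (m + 1), (eulerianNumber m j : ℂ) * l ^ (m - j) := by
  set U := {t : ℂ | l * Complex.exp t ≠ 1}
  set g : ℕ → ℂ → ℂ := fun n t =>
    -((eulerianPolynomial ℂ n).eval (l * Complex.exp t) / (1 - l * Complex.exp t) ^ (n + 1))
  have hU : IsOpen U := isOpen_ne_fun (by fun_prop) continuous_const
  have hg (n : ℕ) (t : ℂ) (ht : t ∈ U) : HasDerivAt (g n) (g (n + 1) t) t :=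
    (hasDerivAt_eval_eulerianPolynomial_div l n ht).fun_neg
  have hf : (fun t => t / (l * Complex.exp t - 1)) = fun t => t * g 0 t := by
    funext t
    rw [← neg_sub (1 : ℂ)]
    simp only [g, eulerianPolynomial_zero, eval_one, zero_add, pow_one]
    rw [div_neg, mul_neg, mul_one_div]
  have h0 : (0 : ℂ) ∈ U := by simpa [U] using hl
  rw [apostolBernoulli, iteratedDeriv_eq_iterate, hf,
    eqOn_iterate_deriv_id_mul hU hg (m + 1) h0]
  simp [g, eulerianPolynomial_eq_sum, eval_finsetSum]
  ring
end
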